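/- Let a ∈ ℝ, 1 < p < ∞ and 1 ≤ q, r ≤ ∞, and let p', q', r' denote the conjugate exponents of p, q, r (1/p + 1/p' = 1, etc.). Then for all measurable functions f and g on Ω, ∫_Ω |f·g| dμ ≤ ‖f‖_{HL^{a,r}_{p,q}} · ‖g‖_{HL^{-a,r'}_{p',q'}}. -/

import Mathlib

open MeasureTheory ENNReal Set Filter Topology

noncomputable section

variable {X : Type*}

/-- The decreasing rearrangement `f*` of `f` with respect to `μ` :
`f*(s) = inf {α ≥ 0 : μ({x : |f(x)| > α}) ≤ s}`. -/
def rearr [MeasurableSpace X] (μ : Measure X) (f : X → ℝ) (s : ℝ) : ℝ≥0∞ :=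
  sInf {α : ℝ≥0∞ | μ {x | α < ENNReal.ofReal |f x|} ≤ ENNReal.ofReal s}

/-- The averaged (maximal) rearrangement `f**(s) = (1/s)∫_0^s f*(t) dt`. -/
def rearrStar [MeasurableSpace X] (μ : Measure X) (f : X → ℝ) (s : ℝ) : ℝ≥0∞ :=
  (ENNReal.ofReal s)⁻¹ * ∫⁻ t in Set.Ioc (0 : ℝ) s, rearr μ f t

/-- The Lorentz functional built from a rearrangement-type function `R`:
`(∫_0^∞ (t^{1/p} R(t))^r dt/t)^{1/r}` for `r < ∞`, and `sup_{t>0} t^{1/p} R(t)`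
for `r = ∞` (when `p = ∞`, `1/p` is interpreted as `0`, which for `R = f*`
recovers the essential supremum of `|f|`). -/
def lorentzNormOf (R : ℝ → ℝ≥0∞) (p r : ℝ≥0∞) : ℝ≥0∞ :=
  if r = ∞ then ⨆ t : {t : ℝ // 0 < t}, ENNReal.ofReal (t.1 ^ p.toReal⁻¹) * R t.1
  else (∫⁻ t in Set.Ioi (0 : ℝ),
      (ENNReal.ofReal (t ^ p.toReal⁻¹) * R t) ^ r.toReal / ENNReal.ofReal t) ^ r.toReal⁻¹

/-- The Lorentz quasi-norm `‖f‖_{L^{p,r}}`. -/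
def lorentzNorm [MeasurableSpace X] (μ : Measure X) (p r : ℝ≥0∞) (f : X → ℝ) : ℝ≥0∞ :=
  lorentzNormOf (rearr μ f) p r

/-- The Lorentz norm `‖f‖*_{L^{p,r}}`, with `f*` replaced by `f**`. -/
def lorentzNormStar [MeasurableSpace X] (μ : Measure X) (p r : ℝ≥0∞) (f : X → ℝ) : ℝ≥0∞ :=
  lorentzNormOf (rearrStar μ f) p r

/-- The annuli `A_u`, `u ≥ -1`:  `A_{-1} = {x ∈ Ω : |x| < 1/2}` and, for `u ≥ 0`,
`A_u = {x ∈ Ω : 2^{u-1} ≤ |x| < 2^u}`. -/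
def annulus [Norm X] (Ω : Set X) (u : ℤ) : Set X :=
  if u = -1 then {x ∈ Ω | ‖x‖ < 1 / 2}
  else {x ∈ Ω | (2 : ℝ) ^ (u - 1) ≤ ‖x‖ ∧ ‖x‖ < (2 : ℝ) ^ u}

/-- The Herz-type functional built from a functional `L` on the blocks:
`(Σ_{u ≥ -1} (2^{ua} L(f χ_{A_u}))^q)^{1/q}` for `q < ∞`, with the sup-modification
for `q = ∞`. -/
def herzNormWith {E : Type*} [Norm X] [Zero E] (Ω : Set X) (a : ℝ) (q : ℝ≥0∞)
    (L : (X → E) → ℝ≥0∞) (f : X → E) : ℝ≥0∞ :=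
  if q = ∞ then
    ⨆ u : {u : ℤ // -1 ≤ u},
      ENNReal.ofReal ((2 : ℝ) ^ ((u.1 : ℝ) * a)) * L ((annulus Ω u.1).indicator f)
  else (∑' u : {u : ℤ // -1 ≤ u},
      (ENNReal.ofReal ((2 : ℝ) ^ ((u.1 : ℝ) * a)) * L ((annulus Ω u.1).indicator f)) ^ q.toReal)
      ^ q.toReal⁻¹

/-- The non-homogeneous Lorentz–Herz quasi-norm `‖f‖_{HL^{a,r}_{p,q}}`. -/
def herzNorm [MeasurableSpace X] [Norm X] (μ : Measure X) (Ω : Set X) (a : ℝ)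
    (p q r : ℝ≥0∞) (f : X → ℝ) : ℝ≥0∞ :=
  herzNormWith Ω a q (lorentzNorm μ p r) f

/-- The non-homogeneous Lorentz–Herz norm `‖f‖*_{HL^{a,r}_{p,q}}`, built from the
Lorentz norms `‖·‖*_{L^{p,r}}`. -/
def herzNormStar [MeasurableSpace X] [Norm X] (μ : Measure X) (Ω : Set X) (a : ℝ)
    (p q r : ℝ≥0∞) (f : X → ℝ) : ℝ≥0∞ :=
  herzNormWith Ω a q (lorentzNormStar μ p r) f

/-- The conjugate exponent: `1/p + 1/p' = 1`, with `1' = ∞` and `∞' = 1`. -/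
def conjExp (p : ℝ≥0∞) : ℝ≥0∞ :=
  if p = 1 then ∞ else if p = ∞ then 1 else ENNReal.ofReal (p.toReal / (p.toReal - 1))

/-- The quantity `(Σ_{u≥-1} (2^{ua} μ(A_u ∩ E)^{1/p})^q)^{(of the summands)}`,
i.e. `Σ_{u≥-1} 2^{uaq} μ(A_u ∩ E)^{q/p}` for `q < ∞`, with the sup-modification
for `q = ∞`. -/
def herzSetNorm [MeasurableSpace X] [Norm X] (μ : Measure X) (Ω : Set X) (a : ℝ)
    (p q : ℝ≥0∞) (E : Set X) : ℝ≥0∞ :=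
  if q = ∞ then
    ⨆ u : {u : ℤ // -1 ≤ u},
      ENNReal.ofReal ((2 : ℝ) ^ ((u.1 : ℝ) * a)) * μ (annulus Ω u.1 ∩ E) ^ p.toReal⁻¹
  else ∑' u : {u : ℤ // -1 ≤ u},
      (ENNReal.ofReal ((2 : ℝ) ^ ((u.1 : ℝ) * a)) * μ (annulus Ω u.1 ∩ E) ^ p.toReal⁻¹) ^ q.toReal

/-- The Peetre K-functional for the couple of quasi-normed function spaces
determined by the functionals `n₀`, `n₁`. -/
def Kfun [MeasurableSpace X] (n₀ n₁ : (X → ℝ) → ℝ≥0∞) (t : ℝ) (f : X → ℝ) : ℝ≥0∞ :=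
  ⨅ (g : X → ℝ) (_ : Measurable g) (_ : Measurable (f - g)),
    n₀ g + ENNReal.ofReal t * n₁ (f - g)

/-- The real interpolation quasi-norm `‖f‖_{(X₀,X₁)_{θ,q}}`. -/
def interpNorm [MeasurableSpace X] (n₀ n₁ : (X → ℝ) → ℝ≥0∞) (θ : ℝ) (q : ℝ≥0∞)
    (f : X → ℝ) : ℝ≥0∞ :=
  if q = ∞ then ⨆ t : {t : ℝ // 0 < t}, ENNReal.ofReal (t.1 ^ (-θ)) * Kfun n₀ n₁ t.1 f
  else (∫⁻ t in Set.Ioi (0 : ℝ),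
      (ENNReal.ofReal (t ^ (-θ)) * Kfun n₀ n₁ t f) ^ q.toReal / ENNReal.ofReal t) ^ q.toReal⁻¹

/-- Membership in the sum `X₀ + X₁` of the couple determined by `n₀`, `n₁`. -/
def inSum [MeasurableSpace X] (n₀ n₁ : (X → ℝ) → ℝ≥0∞) (f : X → ℝ) : Prop :=
  ∃ g : X → ℝ, Measurable g ∧ Measurable (f - g) ∧ n₀ g < ∞ ∧ n₁ (f - g) < ∞

end
abbrev Euc (N : ℕ) : Type := EuclideanSpace ℝ (Fin N)

/-!
Decompose `Ω` into the annuli `A_u`. On each annulus the Hardy–Littlewood inequality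
`∫ |f g| dμ ≤ ∫₀^∞ f*(t) g*(t) dt`, a consequence of the layer cake formula, combined with the
factorisation `f* g* dt = (t^{1/p} f*) (t^{1/p'} g*) dt/t` and Hölder's inequality in `L^r(dt/t)`,
gives `∫_{A_u} |f g| ≤ ‖f χ_{A_u}‖_{L^{p,r}} ‖g χ_{A_u}‖_{L^{p',r'}}`. Multiplying the two factors by
`2^{ua}` and `2^{-ua}` and applying Hölder's inequality in `ℓ^q` over `u ≥ -1` concludes.
-/

section Rearrangement

variable {X : Type*} [MeasurableSpace X] {μ : Measure X} {f : X → ℝ}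

def distribution (μ : Measure X) (f : X → ℝ) (α : ℝ≥0∞) : ℝ≥0∞ :=
  μ {x | α < ENNReal.ofReal |f x|}

lemma distribution_antitone : Antitone (distribution μ f) := fun _ _ hαβ =>
  measure_mono fun _ hx => hαβ.trans_lt hx

lemma distribution_le_of_forall_lt {α c : ℝ≥0∞} (h : ∀ β, α < β → distribution μ f β ≤ c) :
    distribution μ f α ≤ c := by
  rcases eq_or_ne α ∞ with rfl | hα
  · simp [distribution]
  obtain ⟨u, hu_anti, hu_mem, hu_lim⟩ := exists_seq_strictAnti_tendsto' hα.lt_top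
  have hunion : {x | α < ENNReal.ofReal |f x|} = ⋃ n, {x | u n < ENNReal.ofReal |f x|} := by
    ext x
    simp only [mem_iUnion]
    exact ⟨fun hx => (hu_lim.eventually (gt_mem_nhds hx)).exists,
      fun ⟨n, hn⟩ => (hu_mem n).1.trans hn⟩
  have hmono : Monotone fun n => {x | u n < ENNReal.ofReal |f x|} :=
    fun m n hmn _ hx => (hu_anti.antitone hmn).trans_lt hx
  rw [distribution, hunion, hmono.measure_iUnion]
  exact iSup_le fun n => h _ (hu_mem n).1

lemma rearr_le_iff {t : ℝ} {α : ℝ≥0∞} :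
    rearr μ f t ≤ α ↔ distribution μ f α ≤ ENNReal.ofReal t := by
  refine ⟨fun h => distribution_le_of_forall_lt fun β hβ => ?_, fun h => sInf_le h⟩
  obtain ⟨γ, hγ, hγβ⟩ := sInf_lt_iff.1 (h.trans_lt hβ)
  exact (distribution_antitone hγβ.le).trans hγ

lemma lt_rearr_iff {t : ℝ} {α : ℝ≥0∞} :
    α < rearr μ f t ↔ ENNReal.ofReal t < distribution μ f α := by
  simpa only [not_le] using rearr_le_iff.not

lemma rearr_antitone : Antitone (rearr μ f) := fun _ _ hst =>
  sInf_le_sInf fun _ hα => hα.trans (ENNReal.ofReal_le_ofReal hst)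

lemma measurable_rearr : Measurable (rearr μ f) := rearr_antitone.measurable

end Rearrangement

lemma volume_restrict_Ioi_ofReal_lt (c : ℝ≥0∞) :
    volume.restrict (Ioi 0) {t : ℝ | ENNReal.ofReal t < c} = c := by
  rw [Measure.restrict_apply' measurableSet_Ioi]
  rcases eq_or_ne c ∞ with rfl | hc
  · simp
  · have : {t : ℝ | ENNReal.ofReal t < c} ∩ Ioi 0 = Ioo 0 c.toReal := by
      ext t
      simp only [mem_inter_iff, mem_ofPred_eq, mem_Ioi, mem_Ioo]
      exact ⟨fun ⟨h, ht⟩ => ⟨ht, (ENNReal.ofReal_lt_iff_lt_toReal ht.le hc).1 h⟩,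
        fun ⟨ht, h⟩ => ⟨(ENNReal.ofReal_lt_iff_lt_toReal ht.le hc).2 h, ht⟩⟩
    rw [this, Real.volume_Ioo, sub_zero, ENNReal.ofReal_toReal hc]

lemma lintegral_eq_lintegral_measure_ofReal_lt {α : Type*} [MeasurableSpace α] (ν : Measure α)
    [SFinite ν] {F : α → ℝ≥0∞} (hF : Measurable F) :
    ∫⁻ x, F x ∂ν = ∫⁻ s in Ioi 0, ν {x | ENNReal.ofReal s < F x} := by
  have hS : MeasurableSet {z : α × ℝ | ENNReal.ofReal z.2 < F z.1} :=
    measurableSet_lt (by fun_prop) (hF.comp measurable_fst)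
  calc ∫⁻ x, F x ∂ν
      = ∫⁻ x, volume.restrict (Ioi 0) {s : ℝ | ENNReal.ofReal s < F x} ∂ν := by
        simp only [volume_restrict_Ioi_ofReal_lt]
    _ = ∫⁻ s in Ioi 0, ν {x | ENNReal.ofReal s < F x} :=
        (Measure.prod_apply (ν := volume.restrict (Ioi 0)) hS).symm.trans
          (Measure.prod_apply_symm hS)

section HardyLittlewood

variable {X : Type*} [MeasurableSpace X] {μ : Measure X} [SFinite μ] {f g : X → ℝ}

lemma setLIntegral_le_lintegral_rearr (hg : Measurable g) (E : Set X) :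
    ∫⁻ x in E, ENNReal.ofReal |g x| ∂μ
      ≤ ∫⁻ t in {t | ENNReal.ofReal t < μ E}, rearr μ g t ∂volume.restrict (Ioi 0) := by
  have hG : Measurable fun x => ENNReal.ofReal |g x| := by fun_prop
  rw [lintegral_eq_lintegral_measure_ofReal_lt _ hG,
    lintegral_eq_lintegral_measure_ofReal_lt _ measurable_rearr]
  refine lintegral_mono fun s => ?_
  have hlevel : {t : ℝ | ENNReal.ofReal s < rearr μ g t} ∩ {t | ENNReal.ofReal t < μ E}
      = {t | ENNReal.ofReal t < min (distribution μ g (ENNReal.ofReal s)) (μ E)} := by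
    ext t
    simp only [mem_inter_iff, mem_ofPred_eq, lt_rearr_iff, lt_min_iff]
  rw [Measure.restrict_apply (measurableSet_lt measurable_const hG),
    Measure.restrict_apply (measurableSet_lt measurable_const measurable_rearr), hlevel,
    volume_restrict_Ioi_ofReal_lt]
  exact le_min (measure_mono inter_subset_left) (measure_mono inter_subset_right)

theorem lintegral_mul_le_lintegral_rearr_mul_rearr (hf : Measurable f) (hg : Measurable g) :
    ∫⁻ x, ENNReal.ofReal |f x| * ENNReal.ofReal |g x| ∂μ
      ≤ ∫⁻ t in Ioi 0, rearr μ f t * rearr μ g t := by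
  have hF : Measurable fun x => ENNReal.ofReal |f x| := by fun_prop
  have hG : Measurable fun x => ENNReal.ofReal |g x| := by fun_prop
  have hlevel : ∀ s : ℝ, {t : ℝ | ENNReal.ofReal t < distribution μ f (ENNReal.ofReal s)}
      = {t | ENNReal.ofReal s < rearr μ f t} := fun s => by
    ext t; exact lt_rearr_iff.symm
  calc ∫⁻ x, ENNReal.ofReal |f x| * ENNReal.ofReal |g x| ∂μ
      = ∫⁻ x, ENNReal.ofReal |f x| ∂μ.withDensity fun x => ENNReal.ofReal |g x| := by
        rw [lintegral_withDensity_eq_lintegral_mul _ hG hF]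
        simp only [Pi.mul_apply, mul_comm]
    _ = ∫⁻ s in Ioi 0, ∫⁻ x in {x | ENNReal.ofReal s < ENNReal.ofReal |f x|},
          ENNReal.ofReal |g x| ∂μ := by
        rw [lintegral_eq_lintegral_measure_ofReal_lt _ hF]
        simp only [withDensity_apply _ (measurableSet_lt measurable_const hF)]
    _ ≤ ∫⁻ s in Ioi 0, ∫⁻ t in {t | ENNReal.ofReal s < rearr μ f t}, rearr μ g t
          ∂volume.restrict (Ioi 0) := by
        refine lintegral_mono fun s => ?_
        rw [← hlevel]
        exact setLIntegral_le_lintegral_rearr hg _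
    _ = ∫⁻ t, rearr μ f t ∂(volume.restrict (Ioi 0)).withDensity (rearr μ g) := by
        rw [lintegral_eq_lintegral_measure_ofReal_lt _ measurable_rearr]
        simp only [withDensity_apply _ (measurableSet_lt measurable_const measurable_rearr)]
    _ = ∫⁻ t in Ioi 0, rearr μ f t * rearr μ g t := by
        rw [lintegral_withDensity_eq_lintegral_mul _ measurable_rearr measurable_rearr]
        simp only [Pi.mul_apply, mul_comm]

end HardyLittlewood

lemma ENNReal.HolderConjugate.inv_toReal_add_inv_toReal {p q : ℝ≥0∞} [p.HolderConjugate q] :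
    p.toReal⁻¹ + q.toReal⁻¹ = 1 := by
  have h := congrArg ENNReal.toReal (HolderConjugate.inv_add_inv_eq_one p q)
  rwa [ENNReal.toReal_add (inv_ne_top.2 (HolderConjugate.ne_zero p q))
    (inv_ne_top.2 (HolderConjugate.ne_zero q p)), toReal_inv, toReal_inv, toReal_one] at h

lemma holderConjugate_conjExp {p : ℝ≥0∞} (hp : 1 ≤ p) : p.HolderConjugate (conjExp p) := by
  rcases hp.eq_or_lt with rfl | hp1
  · rw [conjExp, if_pos rfl]; infer_instance
  rcases eq_or_ne p ∞ with rfl | hp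
  · rw [conjExp, if_neg one_lt_top.ne', if_pos rfl]; infer_instance
  have hp1' : 1 < p.toReal := by simpa using (toReal_lt_toReal one_ne_top hp).2 hp1
  refine HolderConjugate.of_toReal ?_
  rw [conjExp, if_neg hp1.ne', if_neg hp, toReal_ofReal (by positivity)]
  exact .conjExponent hp1'

section Holder

variable {ι : Type*} [MeasurableSpace ι] {ν : Measure ι} {φ ψ : ι → ℝ≥0∞}

lemma lintegral_mul_le_eLpNorm_top_mul_eLpNorm_one (hψ : AEMeasurable ψ ν) :
    ∫⁻ i, φ i * ψ i ∂ν ≤ eLpNorm φ ∞ ν * eLpNorm ψ 1 ν := by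
  simp only [eLpNorm_exponent_top, eLpNormEssSup_eq_essSup_enorm, eLpNorm_one_eq_lintegral_enorm,
    enorm_eq_self]
  rw [← lintegral_const_mul'' _ hψ]
  exact lintegral_mono_ae <| (ae_le_essSup φ).mono fun i hi => mul_le_mul_left hi _

theorem lintegral_mul_le_eLpNorm_mul_eLpNorm (hφ : AEMeasurable φ ν) (hψ : AEMeasurable ψ ν)
    (r r' : ℝ≥0∞) [r.HolderConjugate r'] :
    ∫⁻ i, φ i * ψ i ∂ν ≤ eLpNorm φ r ν * eLpNorm ψ r' ν := by
  rcases eq_or_ne r ∞ with rfl | hr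
  · rw [(HolderConjugate.eq_top_iff_eq_one ∞ r').1 rfl]
    exact lintegral_mul_le_eLpNorm_top_mul_eLpNorm_one hψ
  rcases eq_or_ne r' ∞ with rfl | hr'
  · rw [(HolderConjugate.eq_top_iff_eq_one ∞ r).1 rfl, mul_comm]
    simpa only [mul_comm (φ _)] using lintegral_mul_le_eLpNorm_top_mul_eLpNorm_one hφ
  rw [eLpNorm_eq_lintegral_rpow_enorm_toReal (HolderConjugate.ne_zero r r') hr,
    eLpNorm_eq_lintegral_rpow_enorm_toReal (HolderConjugate.ne_zero r' r) hr']
  simpa only [enorm_eq_self, Pi.mul_apply] using ENNReal.lintegral_mul_le_Lp_mul_Lq ν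
    (HolderConjugate.toReal_of_ne_top hr hr') hφ hψ

end Holder

section Lorentz

noncomputable def multiplicativeHaar : Measure ℝ :=
  (volume.restrict (Ioi 0)).withDensity fun t => (ENNReal.ofReal t)⁻¹

lemma lintegral_multiplicativeHaar {F : ℝ → ℝ≥0∞} (hF : Measurable F) :
    ∫⁻ t, F t ∂multiplicativeHaar = ∫⁻ t in Ioi 0, F t / ENNReal.ofReal t := by
  rw [multiplicativeHaar, lintegral_withDensity_eq_lintegral_mul _ (by fun_prop) hF]
  simp only [Pi.mul_apply, div_eq_mul_inv, mul_comm]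

lemma lintegral_mul_eq_lintegral_multiplicativeHaar {a b : ℝ} (hab : a + b = 1)
    {F G : ℝ → ℝ≥0∞} (hF : Measurable F) (hG : Measurable G) :
    ∫⁻ t in Ioi 0, F t * G t
      = ∫⁻ t, ENNReal.ofReal (t ^ a) * F t * (ENNReal.ofReal (t ^ b) * G t)
          ∂multiplicativeHaar := by
  rw [lintegral_multiplicativeHaar (by fun_prop)]
  refine setLIntegral_congr_fun measurableSet_Ioi fun t (ht : 0 < t) => ?_
  have hweight : ENNReal.ofReal (t ^ a) * ENNReal.ofReal (t ^ b) = ENNReal.ofReal t := by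
    rw [← ENNReal.ofReal_mul (by positivity), ← Real.rpow_add ht, hab, Real.rpow_one]
  rw [mul_mul_mul_comm, hweight, mul_div_assoc, ENNReal.mul_div_cancel
    (ENNReal.ofReal_pos.2 ht).ne' ofReal_ne_top]

lemma measurable_rpow_mul {R : ℝ → ℝ≥0∞} (hR : Measurable R) (c : ℝ) :
    Measurable fun t => ENNReal.ofReal (t ^ c) * R t := by
  fun_prop

lemma eLpNorm_le_lorentzNormOf {R : ℝ → ℝ≥0∞} (hR : Measurable R) (p r : ℝ≥0∞) :
    eLpNorm (fun t => ENNReal.ofReal (t ^ p.toReal⁻¹) * R t) r multiplicativeHaar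
      ≤ lorentzNormOf R p r := by
  rcases eq_or_ne r 0 with rfl | hr0
  · simp
  rw [lorentzNormOf]
  split_ifs with hr
  · subst hr
    simp only [eLpNorm_exponent_top, eLpNormEssSup_eq_essSup_enorm, enorm_eq_self]
    have hpos : ∀ᵐ t ∂multiplicativeHaar, t ∈ Ioi 0 :=
      (withDensity_absolutelyContinuous _ _).ae_le (ae_restrict_mem measurableSet_Ioi)
    exact essSup_le_of_ae_le _ <| hpos.mono fun t ht =>
      le_iSup (fun s : {s : ℝ // 0 < s} => ENNReal.ofReal (s.1 ^ p.toReal⁻¹) * R s.1) ⟨t, ht⟩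
  · simp only [eLpNorm_eq_lintegral_rpow_enorm_toReal hr0 hr, enorm_eq_self, one_div]
    rw [lintegral_multiplicativeHaar ((measurable_rpow_mul hR _).pow_const _)]

variable {X : Type*} [MeasurableSpace X] {μ : Measure X} [SFinite μ] {f g : X → ℝ}

theorem lintegral_mul_le_lorentzNorm_mul_lorentzNorm (hf : Measurable f) (hg : Measurable g)
    {p r : ℝ≥0∞} (hp : 1 ≤ p) (hr : 1 ≤ r) :
    ∫⁻ x, ENNReal.ofReal |f x| * ENNReal.ofReal |g x| ∂μ
      ≤ lorentzNorm μ p r f * lorentzNorm μ (conjExp p) (conjExp r) g := by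
  have := holderConjugate_conjExp hp
  have := holderConjugate_conjExp hr
  calc ∫⁻ x, ENNReal.ofReal |f x| * ENNReal.ofReal |g x| ∂μ
      ≤ ∫⁻ t in Ioi 0, rearr μ f t * rearr μ g t :=
        lintegral_mul_le_lintegral_rearr_mul_rearr hf hg
    _ = ∫⁻ t, ENNReal.ofReal (t ^ p.toReal⁻¹) * rearr μ f t
          * (ENNReal.ofReal (t ^ (conjExp p).toReal⁻¹) * rearr μ g t) ∂multiplicativeHaar :=
        lintegral_mul_eq_lintegral_multiplicativeHaar
          HolderConjugate.inv_toReal_add_inv_toReal measurable_rearr measurable_rearr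
    _ ≤ eLpNorm (fun t => ENNReal.ofReal (t ^ p.toReal⁻¹) * rearr μ f t) r multiplicativeHaar
          * eLpNorm (fun t => ENNReal.ofReal (t ^ (conjExp p).toReal⁻¹) * rearr μ g t)
            (conjExp r) multiplicativeHaar :=
        lintegral_mul_le_eLpNorm_mul_eLpNorm
          (measurable_rpow_mul measurable_rearr _).aemeasurable
          (measurable_rpow_mul measurable_rearr _).aemeasurable _ _
    _ ≤ lorentzNorm μ p r f * lorentzNorm μ (conjExp p) (conjExp r) g := by
        gcongr <;> exact eLpNorm_le_lorentzNormOf measurable_rearr _ _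

end Lorentz

section Annulus

variable {X : Type*} {Ω : Set X}

lemma subset_iUnion_annulus [Norm X] : Ω ⊆ ⋃ u : {u : ℤ // -1 ≤ u}, annulus Ω u := by
  intro x hx
  rw [mem_iUnion]
  rcases lt_or_ge ‖x‖ (1 / 2) with hsmall | hlarge
  · exact ⟨⟨-1, le_rfl⟩, by rw [annulus, if_pos rfl]; exact ⟨hx, hsmall⟩⟩
  obtain ⟨n, hn⟩ := exists_mem_Ico_zpow (lt_of_lt_of_le (by norm_num) hlarge) _root_.one_lt_two
  have hn1 : -1 < n + 1 := by
    refine (zpow_lt_zpow_iff_right₀ _root_.one_lt_two).1 (lt_of_le_of_lt ?_ hn.2)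
    exact (by norm_num : (2 : ℝ) ^ (-1 : ℤ) = 1 / 2).trans_le hlarge
  refine ⟨⟨n + 1, hn1.le⟩, ?_⟩
  rw [annulus, if_neg hn1.ne', add_sub_cancel_right]
  exact ⟨hx, hn⟩

lemma measurableSet_annulus [SeminormedAddGroup X] [MeasurableSpace X] [OpensMeasurableSpace X]
    (hΩ : MeasurableSet Ω) (u : ℤ) : MeasurableSet (annulus Ω u) := by
  have hnorm : Measurable fun x : X => ‖x‖ := continuous_norm.measurable
  rw [annulus]
  split_ifs
  · exact hΩ.inter (measurableSet_lt hnorm measurable_const)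
  · exact hΩ.inter ((measurableSet_le measurable_const hnorm).inter
      (measurableSet_lt hnorm measurable_const))

end Annulus

lemma herzNormWith_eq_eLpNorm {X E : Type*} [Norm X] [Zero E] (Ω : Set X) (a : ℝ) {q : ℝ≥0∞}
    (hq : q ≠ 0) (L : (X → E) → ℝ≥0∞) (f : X → E) :
    herzNormWith Ω a q L f = eLpNorm (fun u : {u : ℤ // -1 ≤ u} =>
      ENNReal.ofReal ((2 : ℝ) ^ ((u.1 : ℝ) * a)) * L ((annulus Ω u.1).indicator f)) q .count := by
  rw [herzNormWith]
  split_ifs with hq_top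
  · subst hq_top
    simp only [eLpNorm_exponent_top, eLpNormEssSup_eq_essSup_enorm, enorm_eq_self, essSup_count]
  · rw [eLpNorm_eq_lintegral_rpow_enorm_toReal hq hq_top, lintegral_count, one_div]
    simp only [enorm_eq_self]

section Herz

variable {X : Type*} [SeminormedAddGroup X] [MeasurableSpace X] [OpensMeasurableSpace X]
  {μ : Measure X} [SFinite μ] {Ω : Set X} {f g : X → ℝ}

lemma setLIntegral_annulus_le_lorentzNorm_mul_lorentzNorm (hΩ : MeasurableSet Ω)
    (hf : Measurable f) (hg : Measurable g) {p r : ℝ≥0∞} (hp : 1 ≤ p) (hr : 1 ≤ r) (u : ℤ) :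
    ∫⁻ x in annulus Ω u, ENNReal.ofReal |f x * g x| ∂μ
      ≤ lorentzNorm μ p r ((annulus Ω u).indicator f)
        * lorentzNorm μ (conjExp p) (conjExp r) ((annulus Ω u).indicator g) := by
  have hA := measurableSet_annulus hΩ u
  have hblock : ∫⁻ x in annulus Ω u, ENNReal.ofReal |f x * g x| ∂μ
      = ∫⁻ x, ENNReal.ofReal |(annulus Ω u).indicator f x|
          * ENNReal.ofReal |(annulus Ω u).indicator g x| ∂μ := by
    rw [← lintegral_indicator hA]
    refine lintegral_congr fun x => ?_
    by_cases hx : x ∈ annulus Ω u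
    · simp [hx, abs_mul, ENNReal.ofReal_mul]
    · simp [hx]
  rw [hblock]
  exact lintegral_mul_le_lorentzNorm_mul_lorentzNorm (hf.indicator hA) (hg.indicator hA) hp hr

theorem setLIntegral_abs_mul_le_herzNorm_mul_herzNorm (hΩ : MeasurableSet Ω) (a : ℝ)
    {p q r : ℝ≥0∞} (hp : 1 ≤ p) (hq : 1 ≤ q) (hr : 1 ≤ r) (hf : Measurable f)
    (hg : Measurable g) :
    ∫⁻ x in Ω, ENNReal.ofReal |f x * g x| ∂μ
      ≤ herzNorm μ Ω a p q r f * herzNorm μ Ω (-a) (conjExp p) (conjExp q) (conjExp r) g := by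
  have := holderConjugate_conjExp hq
  set L₁ := fun u : {u : ℤ // -1 ≤ u} => lorentzNorm μ p r ((annulus Ω u).indicator f)
  set L₂ := fun u : {u : ℤ // -1 ≤ u} =>
    lorentzNorm μ (conjExp p) (conjExp r) ((annulus Ω u).indicator g)
  set w : ℝ → {u : ℤ // -1 ≤ u} → ℝ≥0∞ := fun b u => ENNReal.ofReal ((2 : ℝ) ^ ((u.1 : ℝ) * b))
  have hw : ∀ u, w a u * w (-a) u = 1 := fun u => by
    rw [← ENNReal.ofReal_mul (by positivity), ← Real.rpow_add two_pos, mul_neg, add_neg_cancel,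
      Real.rpow_zero, ENNReal.ofReal_one]
  calc ∫⁻ x in Ω, ENNReal.ofReal |f x * g x| ∂μ
      ≤ ∑' u : {u : ℤ // -1 ≤ u}, ∫⁻ x in annulus Ω u, ENNReal.ofReal |f x * g x| ∂μ :=
        (lintegral_mono_set subset_iUnion_annulus).trans (lintegral_iUnion_le _ _)
    _ ≤ ∑' u, L₁ u * L₂ u := ENNReal.tsum_le_tsum fun u =>
        setLIntegral_annulus_le_lorentzNorm_mul_lorentzNorm hΩ hf hg hp hr u
    _ = ∫⁻ u, w a u * L₁ u * (w (-a) u * L₂ u) ∂.count := by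
        rw [lintegral_count]
        exact tsum_congr fun u => by rw [mul_mul_mul_comm, hw, one_mul]
    _ ≤ eLpNorm (fun u => w a u * L₁ u) q .count
          * eLpNorm (fun u => w (-a) u * L₂ u) (conjExp q) .count :=
        lintegral_mul_le_eLpNorm_mul_eLpNorm (measurable_of_countable _).aemeasurable
          (measurable_of_countable _).aemeasurable _ _
    _ = herzNorm μ Ω a p q r f * herzNorm μ Ω (-a) (conjExp p) (conjExp q) (conjExp r) g := by
        rw [herzNorm, herzNorm, herzNormWith_eq_eLpNorm _ _ (HolderConjugate.ne_zero q (conjExp q)),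
          herzNormWith_eq_eLpNorm _ _ (HolderConjugate.ne_zero (conjExp q) q)]

end Herz

theorem lorentzHerz_holder_general {N : ℕ}
    (Ω : Set (Euc N)) (hΩ : MeasurableSet Ω)
    (a : ℝ) (p q r : ℝ≥0∞) (hp1 : 1 < p) (hq : 1 ≤ q) (hr : 1 ≤ r) :
    ∀ f g : Euc N → ℝ, Measurable f → Measurable g →
      ∫⁻ x in Ω, ENNReal.ofReal |f x * g x| ∂volume
        ≤ herzNorm volume Ω a p q r f
          * herzNorm volume Ω (-a) (conjExp p) (conjExp q) (conjExp r) g :=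
  fun _ _ hf hg => setLIntegral_abs_mul_le_herzNorm_mul_herzNorm hΩ a hp1.le hq hr hf hg

/-- (Hölder inequality for Lorentz–Herz spaces.) For `a ∈ ℝ`,
`1 < p < ∞`, `1 ≤ q, r ≤ ∞` and conjugate exponents `p', q', r'`, one has
`∫_Ω |f g| dμ ≤ ‖f‖_{HL^{a,r}_{p,q}} ‖g‖_{HL^{-a,r'}_{p',q'}}` for all measurable
`f`, `g`. -/
theorem lorentzHerz_holder {N : ℕ} (hN : 1 ≤ N)
    (Ω : Set (Euc N)) (hΩ : MeasurableSet Ω)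
    (a : ℝ) (p q r : ℝ≥0∞) (hp1 : 1 < p) (hp : p ≠ ∞) (hq : 1 ≤ q) (hr : 1 ≤ r) :
    ∀ f g : Euc N → ℝ, Measurable f → Measurable g →
      ∫⁻ x in Ω, ENNReal.ofReal |f x * g x| ∂volume
        ≤ herzNorm volume Ω a p q r f
          * herzNorm volume Ω (-a) (conjExp p) (conjExp q) (conjExp r) g :=
  lorentzHerz_holder_general Ω hΩ a p q r hp1 hq hr
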